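/- arXiv:1204.5583 — 4 statements merged into one kernel-verified Lean document; each statement's English description precedes it below -/
import Mathlib

section
/- With Θ(g,h,k) as above defining classes in H₂(G) ≅ π₂(G) (G simply connected), the map Θ: G³ → π₂(G) satisfies the group 3-cocycle identity: g·Θ(h,k,l) − Θ(gh,k,l) + Θ(g,hk,l) − Θ(g,h,kl) + Θ(g,h,k) = 0 for all g,h,k,l ∈ G, where G acts trivially on π₂(G), so this reads Θ(h,k,l) − Θ(gh,k,l) + Θ(g,hk,l) − Θ(g,h,kl) + Θ(g,h,k) = 0 in π₂(G). -/
/-!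
`Θ` is the inhomogeneous coboundary `d₂β`, so at the level of chains `d₃Θ = d₃d₂β = 0`.
The expression in the theorem differs from `d₃Θ(g,h,k,l)` only by `Θ(h,k,l) - g • Θ(h,k,l)`.
Since `∂` is equivariant, `∂Θ = d₂(∂β) = d₂d₁α = 0`, so `Θ(h,k,l)` is a cycle and `G` moves it
only by a boundary.
-/

section Coboundary

variable {G M N : Type*} [Group G] [AddCommGroup M] [DistribMulAction G M]
  [AddCommGroup N] [DistribMulAction G N]

def coboundary₁ (α : G → M) (g h : G) : M :=
  α g + g • α h - α (g * h)

def coboundary₂ (β : G → G → M) (g h k : G) : M :=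
  g • β h k - β (g * h) k + β g (h * k) - β g h

def coboundary₃ (Θ : G → G → G → M) (g h k l : G) : M :=
  g • Θ h k l - Θ (g * h) k l + Θ g (h * k) l - Θ g h (k * l) + Θ g h k

theorem coboundary₂_coboundary₁ (α : G → M) (g h k : G) :
    coboundary₂ (coboundary₁ α) g h k = 0 := by
  simp only [coboundary₁, coboundary₂, smul_sub, smul_add, mul_smul, mul_assoc]
  abel

theorem coboundary₃_coboundary₂ (β : G → G → M) (g h k l : G) :
    coboundary₃ (coboundary₂ β) g h k l = 0 := by
  simp only [coboundary₂, coboundary₃, smul_sub, smul_add, mul_smul, mul_assoc]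
  abel

theorem map_coboundary₂ (f : M →+ N) (hf : ∀ (g : G) (m : M), f (g • m) = g • f m)
    (β : G → G → M) (g h k : G) :
    f (coboundary₂ β g h k) = coboundary₂ (fun g h => f (β g h)) g h k := by
  simp only [coboundary₂, map_sub, map_add, hf]

end Coboundary

/-- With `Θ(g,h,k) = g·β(h,k) − β(gh,k) + β(g,hk) − β(g,h)` defining
classes in `H₂(G) ≅ π₂(G)` (the quotient of 2-chains by the subgroup `Bd` of
boundaries, on which `G` acts trivially since `g•σ − σ ∈ Bd` for cycles `σ`),
the map `Θ : G³ → π₂(G)` satisfies the group 3-cocycle identity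
`Θ(h,k,l) − Θ(gh,k,l) + Θ(g,hk,l) − Θ(g,h,kl) + Θ(g,h,k) = 0` in `π₂(G)`. -/
theorem stmt4 {G C1 C2 : Type*} [Group G] [AddCommGroup C1] [AddCommGroup C2]
    [DistribMulAction G C1] [DistribMulAction G C2]
    (bd : C2 →+ C1) (hbd : ∀ (g : G) (σ : C2), bd (g • σ) = g • bd σ)
    (α : G → C1) (β : G → G → C2)
    (hβ : ∀ g h : G, bd (β g h) = α g + g • α h - α (g * h))
    (Θ : G → G → G → C2)
    (hΘ : ∀ g h k : G, Θ g h k = g • β h k - β (g * h) k + β g (h * k) - β g h)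
    (Bd : AddSubgroup C2)  -- the subgroup of boundaries of 3-chains
    (hBd : ∀ (g : G) (σ : C2), bd σ = 0 → g • σ - σ ∈ Bd)  -- trivial action on H₂ -- (Hurewicz: H₂(G) ≅ π₂(G) for 1-connected G)
    : ∀ g h k l : G,
      ((Θ h k l - Θ (g * h) k l + Θ g (h * k) l - Θ g h (k * l) + Θ g h k : C2) :
        C2 ⧸ Bd) = 0 := by
  intro g h k l
  obtain rfl : Θ = coboundary₂ β := funext₃ hΘ
  have hβ' : (fun g h => bd (β g h)) = coboundary₁ α := funext₂ hβ
  have hcycle : bd (coboundary₂ β h k l) = 0 := by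
    rw [map_coboundary₂ bd hbd, hβ', coboundary₂_coboundary₁]
  have hchain : coboundary₂ β h k l - coboundary₂ β (g * h) k l + coboundary₂ β g (h * k) l
        - coboundary₂ β g h (k * l) + coboundary₂ β g h k
      = coboundary₃ (coboundary₂ β) g h k l - (g • coboundary₂ β h k l - coboundary₂ β h k l) := by
    rw [coboundary₃]
    abel
  rw [hchain, coboundary₃_coboundary₂, zero_sub, QuotientAddGroup.eq_zero_iff]
  exact neg_mem (hBd g _ hcycle)
end

section
/- Let (φ^{1,1,1}, φ^{1,2,0}, φ^{2,0,1}, φ^{2,1,0}, φ^{3,0,0}) be a differentiable 3-cocycle on BG• with values in (A → B). Then the multiplication map m on arrows of Γ²[φ], defined by m(v₀,v₁,b₀,b₁,a₀,a₁) = (d₁(v₀), d₁(v₁), b₀+b₁+φ^{2,0,1}(v₀), a₀+a₁+φ^{2,1,0}(v₀,v₁)), commutes with the source maps, i.e. m∘s = s∘m, if and only if cocycle equation (7) holds: δ_gp(γ) + δ̌(F) − μ_*(Φ) = 0 (where γ = φ^{1,1,1}, F = φ^{2,0,1}, Φ = φ^{2,1,0}). -/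
section SourceCompatibility

variable {I1 I2 A B : Type*} [AddCommGroup A] [AddCommGroup B]
  (μ : A →+ B) (d0 d1 d2 : I2 → I1)
  (φ111 : I1 → I1 → B) (φ201 : I2 → B) (φ210 : I2 → I2 → A)

/-- The `b`- and `a`-components of the arrow cancel, so the two sides differ exactly by the
left side of the cocycle equation (7). -/
theorem mul_source_eq_source_mul_iff (v0 v1 : I2) (b0 b1 : B) (a0 a1 : A) :
    (b0 + μ a0 + φ111 (d2 v0) (d2 v1)) + (b1 + μ a1 + φ111 (d0 v0) (d0 v1)) + φ201 v1 =
        (b0 + b1 + φ201 v0) + μ (a0 + a1) + μ (φ210 v0 v1) + φ111 (d1 v0) (d1 v1) ↔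
      φ111 (d2 v0) (d2 v1) + φ111 (d0 v0) (d0 v1) + (φ201 v1 - φ201 v0) - μ (φ210 v0 v1)
        - φ111 (d1 v0) (d1 v1) = 0 := by
  rw [← sub_eq_zero]
  congr! 1
  rw [map_add]
  abel

end SourceCompatibility

/-- For a differentiable 3-cocycle
`(φ^{1,1,1}, φ^{1,2,0}, φ^{2,0,1}, φ^{2,1,0}, φ^{3,0,0})` on `BG•` with values in
`(A → B)`, the multiplication `m` on arrows of `Γ²[φ]`,
`m(v₀,v₁,b₀,b₁,a₀,a₁) = (d₁v₀, d₁v₁, b₀+b₁+φ^{2,0,1}(v₀), a₀+a₁+φ^{2,1,0}(v₀,v₁))`,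
commutes with the source maps (`m∘s = s∘m`) if and only if the cocycle equation
`δ_gp(γ) + δ̌(F) − μ_*(Φ) = 0` holds (with `γ = φ^{1,1,1}`, `F = φ^{2,0,1}`,
`Φ = φ^{2,1,0}`).  Here `I1, I2` index the covers of `G` and `G²` and
`d₀, d₁, d₂ : I2 → I1` are the simplicial face maps on indices. -/
theorem stmt13 {I1 I2 A B : Type*} [AddCommGroup A] [AddCommGroup B]
    (μ : A →+ B) (d0 d1 d2 : I2 → I1)
    (φ111 : I1 → I1 → B) (φ201 : I2 → B) (φ210 : I2 → I2 → A) :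
    -- m ∘ s = s ∘ m, written out in components:
    (∀ (v0 v1 : I2) (b0 b1 : B) (a0 a1 : A),
      (b0 + μ a0 + φ111 (d2 v0) (d2 v1)) + (b1 + μ a1 + φ111 (d0 v0) (d0 v1))
          + φ201 v1 =
        (b0 + b1 + φ201 v0) + μ (a0 + a1) + μ (φ210 v0 v1)
          + φ111 (d1 v0) (d1 v1)) ↔
    -- the cocycle equation (7): δ_gp(γ) + δ̌(F) − μ_*(Φ) = 0
    (∀ v0 v1 : I2,
      φ111 (d2 v0) (d2 v1) + φ111 (d0 v0) (d0 v1)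
        + (φ201 v1 - φ201 v0) - μ (φ210 v0 v1)
        - φ111 (d1 v0) (d1 v1) = 0) := by
  refine forall₂_congr fun v0 v1 => ?_
  simp only [mul_source_eq_source_mul_iff, forall_const]
end

section
/- With notation as in the previous statement, the multiplication map m on Γ²[φ] respects groupoid composition (m(γ·γ') = m(γ)·m(γ') for composable arrows γ, γ') if and only if the cocycle equation δ_gp(η) + δ̌(Φ) = 0 holds, where η = φ^{1,2,0} and Φ = φ^{2,1,0}; explicitly: φ^{2,1,0}(v₀,v₁) + φ^{2,1,0}(v₁,v₂) − φ^{1,2,0}(d₁v₀, d₁v₁, d₁v₂) = φ^{2,1,0}(v₀,v₂) − φ^{1,2,0}(d₂v₀,d₂v₁,d₂v₂) − φ^{1,2,0}(d₀v₀,d₀v₁,d₀v₂). -/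
theorem stmt14_general {I1 I2 A : Type*} [AddCommGroup A]
    (d0 d1 d2 : I2 → I1)
    (φ120 : I1 → I1 → I1 → A)
    (φ210 : I2 → I2 → A) :
    -- m respects composition, written out in the A-components
    -- (the B-components agree by definition):
    (∀ (v0 v1 v2 : I2) (a0 a1 a0' a1' : A),
      ((a0 + a0' - φ120 (d2 v0) (d2 v1) (d2 v2))
          + (a1 + a1' - φ120 (d0 v0) (d0 v1) (d0 v2)) + φ210 v0 v2) =
        ((a0 + a1 + φ210 v0 v1) + (a0' + a1' + φ210 v1 v2)
          - φ120 (d1 v0) (d1 v1) (d1 v2))) ↔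
    -- the cocycle equation δ_gp(η) + δ̌(Φ) = 0:
    (∀ v0 v1 v2 : I2,
      φ210 v0 v1 + φ210 v1 v2 - φ120 (d1 v0) (d1 v1) (d1 v2) =
        φ210 v0 v2 - φ120 (d2 v0) (d2 v1) (d2 v2)
          - φ120 (d0 v0) (d0 v1) (d0 v2)) := by
  -- The arrow components a0, a1, a0', a1' cancel, so each equation is the other one rearranged.
  constructor
  · intro hcomp v0 v1 v2
    linear_combination (norm := module) -hcomp v0 v1 v2 0 0 0 0
  · intro hcocycle v0 v1 v2 a0 a1 a0' a1'
    linear_combination (norm := module) -hcocycle v0 v1 v2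

/-- The multiplication `m` on `Γ²[φ]` respects groupoid composition
(`m(γ·γ') = m(γ)·m(γ')` for composable arrows) if and only if the cocycle
equation `δ_gp(η) + δ̌(Φ) = 0` holds (with `η = φ^{1,2,0}`, `Φ = φ^{2,1,0}`);
explicitly
`φ^{2,1,0}(v₀,v₁) + φ^{2,1,0}(v₁,v₂) − φ^{1,2,0}(d₁v₀,d₁v₁,d₁v₂) =
 φ^{2,1,0}(v₀,v₂) − φ^{1,2,0}(d₂v₀,d₂v₁,d₂v₂) − φ^{1,2,0}(d₀v₀,d₀v₁,d₀v₂)`. -/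
theorem stmt14 {I1 I2 A B : Type*} [AddCommGroup A] [AddCommGroup B]
    (μ : A →+ B) (d0 d1 d2 : I2 → I1)
    (φ111 : I1 → I1 → B) (φ120 : I1 → I1 → I1 → A)
    (φ201 : I2 → B) (φ210 : I2 → I2 → A) :
    -- m respects composition, written out in the A-components
    -- (the B-components agree by definition):
    (∀ (v0 v1 v2 : I2) (a0 a1 a0' a1' : A),
      ((a0 + a0' - φ120 (d2 v0) (d2 v1) (d2 v2))
          + (a1 + a1' - φ120 (d0 v0) (d0 v1) (d0 v2)) + φ210 v0 v2) =
        ((a0 + a1 + φ210 v0 v1) + (a0' + a1' + φ210 v1 v2)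
          - φ120 (d1 v0) (d1 v1) (d1 v2))) ↔
    -- the cocycle equation δ_gp(η) + δ̌(Φ) = 0:
    (∀ v0 v1 v2 : I2,
      φ210 v0 v1 + φ210 v1 v2 - φ120 (d1 v0) (d1 v1) (d1 v2) =
        φ210 v0 v2 - φ120 (d2 v0) (d2 v1) (d2 v2)
          - φ120 (d0 v0) (d0 v1) (d0 v2)) :=
  stmt14_general d0 d1 d2 φ120 φ210
end

section
/- With F̃ and Θ̃ a normalized (π₂(G) → 𝔷)-valued group cocycle (dF̃ = per_ω∘Θ̃, dΘ̃ = 0, trivial action, vanishing when an argument is e), define Φ̃_{(i,j),(i',j')}(g,h) as any elements of π₂(G) satisfying per_ω(Φ̃_{(i,j),(i',j')}(g,h)) = F_{i,j}(g,h) − F_{i',j'}(g,h) − γ_{i,i'}(g) − γ_{j,j'}(h) + γ_{ij,i'j'}(gh). Then the combination Φ_{(i',j'),(i'',j'')}(g,h) − Φ_{(i,j),(i'',j'')}(g,h) + Φ_{(i,j),(i',j')}(g,h), when expressed via Θ̃ as Θ̃(i,i⁻¹i',i'⁻¹i'') + Θ̃(i⁻¹i', i'⁻¹i'', i''⁻¹g)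 + Θ̃(j,j⁻¹j',j'⁻¹j'') + Θ̃(j⁻¹j', j'⁻¹j'', j''⁻¹g) − Θ̃(ij,(ij)⁻¹i'j',(i'j')⁻¹i''j'') − Θ̃((ij)⁻¹i'j', (i'j')⁻¹i''j'', (i''j'')⁻¹g), equals −η_{i,i',i''}(g) − η_{j,j',j''}(h) + η_{ij,i'j',i''j''}(gh), where η_{i,j,l}(g) = −Θ̃(j,j⁻¹l,l⁻¹g) + Θ̃(i,i⁻¹l,l⁻¹g) − Θ̃(i,i⁻¹j,j⁻¹g). -/
/-! The cocycle identity for `Θ` at the quadruple `(a, a⁻¹b, b⁻¹c, c⁻¹d)` says exactly that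
`Θ(a, a⁻¹b, b⁻¹c) + Θ(a⁻¹b, b⁻¹c, c⁻¹d) = -η_{a,b,c}(d)`. Each of the three pairs of terms
on the left of the theorem is of this shape, for `(i, i', i'', g)`, `(j, j', j'', h)` and
`(ij, i'j', i''j'', gh)`. -/

theorem cocycle_outer_faces_eq {G P : Type*} [Group G] [AddCommGroup P]
    (Θ : G → G → G → P)
    (hcoc : ∀ g h k l : G,
      Θ h k l - Θ (g * h) k l + Θ g (h * k) l - Θ g h (k * l) + Θ g h k = 0)
    (a b c d : G) :
    Θ a (a⁻¹ * b) (b⁻¹ * c) + Θ (a⁻¹ * b) (b⁻¹ * c) (c⁻¹ * d) =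
      Θ b (b⁻¹ * c) (c⁻¹ * d) - Θ a (a⁻¹ * c) (c⁻¹ * d) + Θ a (a⁻¹ * b) (b⁻¹ * d) := by
  have h := hcoc a (a⁻¹ * b) (b⁻¹ * c) (c⁻¹ * d)
  rw [mul_inv_cancel_left, show a⁻¹ * b * (b⁻¹ * c) = a⁻¹ * c by group,
    show b⁻¹ * c * (c⁻¹ * d) = b⁻¹ * d by group] at h
  linear_combination (norm := abel) h

theorem stmt17_general {G P : Type*} [Group G] [AddCommGroup P]
    (Θ : G → G → G → P)
    (hcoc : ∀ g h k l : G,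
      Θ h k l - Θ (g * h) k l + Θ g (h * k) l - Θ g h (k * l) + Θ g h k = 0)
    (η : G → G → G → G → P)
    (hη : ∀ i j l g : G,
      η i j l g = -Θ j (j⁻¹ * l) (l⁻¹ * g) + Θ i (i⁻¹ * l) (l⁻¹ * g)
        - Θ i (i⁻¹ * j) (j⁻¹ * g)) :
    ∀ i i' i'' j j' j'' g h : G,
      Θ i (i⁻¹ * i') (i'⁻¹ * i'') + Θ (i⁻¹ * i') (i'⁻¹ * i'') (i''⁻¹ * g)
        + Θ j (j⁻¹ * j') (j'⁻¹ * j'') + Θ (j⁻¹ * j') (j'⁻¹ * j'') (j''⁻¹ * h)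
        - Θ (i * j) ((i * j)⁻¹ * (i' * j')) ((i' * j')⁻¹ * (i'' * j''))
        - Θ ((i * j)⁻¹ * (i' * j')) ((i' * j')⁻¹ * (i'' * j''))
            ((i'' * j'')⁻¹ * (g * h)) =
      -η i i' i'' g - η j j' j'' h + η (i * j) (i' * j') (i'' * j'') (g * h) := by
  intro i i' i'' j j' j'' g h
  have hi := cocycle_outer_faces_eq Θ hcoc i i' i'' g
  have hj := cocycle_outer_faces_eq Θ hcoc j j' j'' h
  have hij := cocycle_outer_faces_eq Θ hcoc (i * j) (i' * j') (i'' * j'') (g * h)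
  simp only [hη]
  linear_combination (norm := abel) hi + hj - hij

/-- Let `Θ̃ : G³ → π₂(G)` be a normalized 3-cocycle (trivial
`G`-action) and `η_{i,j,l}(g) = −Θ̃(j,j⁻¹l,l⁻¹g) + Θ̃(i,i⁻¹l,l⁻¹g) − Θ̃(i,i⁻¹j,j⁻¹g)`.
Then the combination
`Φ_{(i',j'),(i'',j'')}(g,h) − Φ_{(i,j),(i'',j'')}(g,h) + Φ_{(i,j),(i',j')}(g,h)`,
expressed via `Θ̃` as the six-term sum below, equals
`−η_{i,i',i''}(g) − η_{j,j',j''}(h) + η_{ij,i'j',i''j''}(gh)`.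
Here `P` plays the role of `π₂(G)`. -/
theorem stmt17 {G P : Type*} [Group G] [AddCommGroup P]
    (Θ : G → G → G → P)
    (hcoc : ∀ g h k l : G,
      Θ h k l - Θ (g * h) k l + Θ g (h * k) l - Θ g h (k * l) + Θ g h k = 0)
    (hnorm : ∀ g h k : G, g = 1 ∨ h = 1 ∨ k = 1 → Θ g h k = 0)
    (η : G → G → G → G → P)
    (hη : ∀ i j l g : G,
      η i j l g = -Θ j (j⁻¹ * l) (l⁻¹ * g) + Θ i (i⁻¹ * l) (l⁻¹ * g)
        - Θ i (i⁻¹ * j) (j⁻¹ * g)) :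
    ∀ i i' i'' j j' j'' g h : G,
      Θ i (i⁻¹ * i') (i'⁻¹ * i'') + Θ (i⁻¹ * i') (i'⁻¹ * i'') (i''⁻¹ * g)
        + Θ j (j⁻¹ * j') (j'⁻¹ * j'') + Θ (j⁻¹ * j') (j'⁻¹ * j'') (j''⁻¹ * h)
        - Θ (i * j) ((i * j)⁻¹ * (i' * j')) ((i' * j')⁻¹ * (i'' * j''))
        - Θ ((i * j)⁻¹ * (i' * j')) ((i' * j')⁻¹ * (i'' * j''))
            ((i'' * j'')⁻¹ * (g * h)) =
      -η i i' i'' g - η j j' j'' h + η (i * j) (i' * j') (i'' * j'') (g * h) :=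
  stmt17_general Θ hcoc η hη
end
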